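/- Let Σ = (A,B,C,D) be a linear control system and let R = {(x̂;x) ∈ ℝ^{n̂}×ℝ^n : Px̂ = x} for a matrix P ∈ ℝ^{n×n̂} with ker P = 0. Then the following are equivalent: (I) there exist a linear control system Σ̂ = (Â,B̂,Ĉ,D̂) with the same internal input dimension and output dimension as Σ, and a matrix P̂ ∈ ℝ^{n̂×n} with R̂ = {(x;x̂) ∈ ℝ^n×ℝ^{n̂} : P̂x = x̂}, such that R induces a simulation function from Σ̂ to Σ and R̂ induces a simulation function from Σ to Σ̂; (II) (A,B) is stabilizable, A·im P ⊆ im P + im B, im D ⊆ im P + im B, and im P + ker C = ℝ^n. -/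

import Mathlib

open Matrix

noncomputable section

abbrev Euc (k : ℕ) := EuclideanSpace ℝ (Fin k)

/-- A real polynomial is Hurwitz if all of its complex roots have negative real part. -/
def PolyHurwitz (p : Polynomial ℝ) : Prop :=
  ∀ z : ℂ, (p.map (algebraMap ℝ ℂ)).IsRoot z → z.re < 0

/-- A real square matrix is Hurwitz if all of its complex eigenvalues (roots of the
characteristic polynomial) have strictly negative real part. -/
def Matrix.IsHurwitz {k : ℕ} (A : Matrix (Fin k) (Fin k) ℝ) : Prop :=
  PolyHurwitz A.charpoly

/-- A subspace `S` is `(A,B)`-externally stabilizable: there is a feedback `K` such that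
`(A + B∘K) S ⊆ S` and the induced map on the quotient space is Hurwitz (all complex roots
of its characteristic polynomial have negative real part). -/
def ExtStabilizable {E U : Type*} [AddCommGroup E] [Module ℝ E]
    [Module.Finite ℝ E] [AddCommGroup U] [Module ℝ U]
    (A : E →ₗ[ℝ] E) (B : U →ₗ[ℝ] E) (S : Submodule ℝ E) : Prop :=
  ∃ K : E →ₗ[ℝ] U, ∃ hinv : S ≤ S.comap (A + B ∘ₗ K),
    PolyHurwitz (Submodule.mapQ S S (A + B ∘ₗ K) hinv).charpoly

/-- The block-diagonal map `A₁₂ = diag(A₁,A₂)` acting on `ℝ^{n₁} × ℝ^{n₂}`. -/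
def A12L {n₁ n₂ : ℕ} (A₁ : Matrix (Fin n₁) (Fin n₁) ℝ) (A₂ : Matrix (Fin n₂) (Fin n₂) ℝ) :
    Euc n₁ × Euc n₂ →ₗ[ℝ] Euc n₁ × Euc n₂ :=
  (Matrix.toEuclideanLin A₁).prodMap (Matrix.toEuclideanLin A₂)

/-- The block map `B₁₂ = [0; B₂] : ℝ^{m₂} → ℝ^{n₁} × ℝ^{n₂}`. -/
def B12L (n₁ : ℕ) {n₂ m₂ : ℕ} (B₂ : Matrix (Fin n₂) (Fin m₂) ℝ) :
    Euc m₂ →ₗ[ℝ] Euc n₁ × Euc n₂ :=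
  LinearMap.prod 0 (Matrix.toEuclideanLin B₂)

/-- The block map `B₂₁ = [B₁; 0] : ℝ^{m₁} → ℝ^{n₁} × ℝ^{n₂}`. -/
def B21L (n₂ : ℕ) {n₁ m₁ : ℕ} (B₁ : Matrix (Fin n₁) (Fin m₁) ℝ) :
    Euc m₁ →ₗ[ℝ] Euc n₁ × Euc n₂ :=
  LinearMap.prod (Matrix.toEuclideanLin B₁) 0

/-- The block map `D₁₂ = [D₁; D₂] : ℝ^{p} → ℝ^{n₁} × ℝ^{n₂}`. -/
def D12L {n₁ n₂ p : ℕ} (D₁ : Matrix (Fin n₁) (Fin p) ℝ) (D₂ : Matrix (Fin n₂) (Fin p) ℝ) :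
    Euc p →ₗ[ℝ] Euc n₁ × Euc n₂ :=
  LinearMap.prod (Matrix.toEuclideanLin D₁) (Matrix.toEuclideanLin D₂)

/-- The block map `C₁₂ = [−C₁  C₂] : ℝ^{n₁} × ℝ^{n₂} → ℝ^{q}`. -/
def C12L {n₁ n₂ q : ℕ} (C₁ : Matrix (Fin q) (Fin n₁) ℝ) (C₂ : Matrix (Fin q) (Fin n₂) ℝ) :
    Euc n₁ × Euc n₂ →ₗ[ℝ] Euc q :=
  (Matrix.toEuclideanLin C₂) ∘ₗ (LinearMap.snd ℝ (Euc n₁) (Euc n₂)) -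
    (Matrix.toEuclideanLin C₁) ∘ₗ (LinearMap.fst ℝ (Euc n₁) (Euc n₂))

/-- A subspace `R ⊆ ℝ^{n₁} × ℝ^{n₂}` induces a simulation function from
`Σ₁ = (A₁,B₁,C₁,D₁)` to `Σ₂ = (A₂,B₂,C₂,D₂)` if
(a) `R` is `(A₁₂,B₁₂)`-externally stabilizable, (b) `A₁₂ R ⊆ R + im B₁₂`,
(c) `im D₁₂ ⊆ R + im B₁₂`, and (d) `R ⊆ ker C₁₂`. -/
def InducesSimFun {n₁ n₂ m₁ m₂ p q : ℕ}
    (A₁ : Matrix (Fin n₁) (Fin n₁) ℝ) (B₁ : Matrix (Fin n₁) (Fin m₁) ℝ)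
    (C₁ : Matrix (Fin q) (Fin n₁) ℝ) (D₁ : Matrix (Fin n₁) (Fin p) ℝ)
    (A₂ : Matrix (Fin n₂) (Fin n₂) ℝ) (B₂ : Matrix (Fin n₂) (Fin m₂) ℝ)
    (C₂ : Matrix (Fin q) (Fin n₂) ℝ) (D₂ : Matrix (Fin n₂) (Fin p) ℝ)
    (R : Submodule ℝ (Euc n₁ × Euc n₂)) : Prop :=
  ExtStabilizable (A12L A₁ A₂) (B12L n₁ B₂) R ∧
  R.map (A12L A₁ A₂) ≤ R ⊔ LinearMap.range (B12L n₁ B₂) ∧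
  LinearMap.range (D12L D₁ D₂) ≤ R ⊔ LinearMap.range (B12L n₁ B₂) ∧
  R ≤ LinearMap.ker (C12L C₁ C₂)

/-- The graph subspace `R = {(x₁,x₂) : P x₁ = x₂}`. -/
def graphSub {n₁ n₂ : ℕ} (P : Matrix (Fin n₂) (Fin n₁) ℝ) :
    Submodule ℝ (Euc n₁ × Euc n₂) :=
  LinearMap.ker ((Matrix.toEuclideanLin P) ∘ₗ (LinearMap.fst ℝ (Euc n₁) (Euc n₂)) -
    LinearMap.snd ℝ (Euc n₁) (Euc n₂))

/-! ### Auxiliary lemmas -/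

lemma toEuclideanLin_mul' {a b c : ℕ} (M : Matrix (Fin a) (Fin b) ℝ) (N : Matrix (Fin b) (Fin c) ℝ) :
    toEuclideanLin (M * N) = (toEuclideanLin M) ∘ₗ (toEuclideanLin N) := by
  simp only [toEuclideanLin_eq_toLin]
  exact Matrix.toLin_mul _ (PiLp.basisFun 2 ℝ (Fin b)) _ M N

lemma toEuclideanLin_one' {a : ℕ} :
    toEuclideanLin (1 : Matrix (Fin a) (Fin a) ℝ) = LinearMap.id := by
  simp only [toEuclideanLin_eq_toLin]
  exact Matrix.toLin_one _

lemma charpoly_toEuclideanLin {k : ℕ} (M : Matrix (Fin k) (Fin k) ℝ) :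
    (Matrix.toEuclideanLin M : Euc k →ₗ[ℝ] Euc k).charpoly = M.charpoly := by
  rw [toEuclideanLin_eq_toLin, ← LinearMap.charpoly_toMatrix _ (PiLp.basisFun 2 ℝ (Fin k)),
    LinearMap.toMatrix_toLin]

lemma exists_factor {V₁ V₂ V₃ : Type*} [AddCommGroup V₁] [Module ℝ V₁]
    [AddCommGroup V₂] [Module ℝ V₂] [AddCommGroup V₃] [Module ℝ V₃]
    (f : V₁ →ₗ[ℝ] V₃) (g : V₂ →ₗ[ℝ] V₃)
    (h : LinearMap.range f ≤ LinearMap.range g) : ∃ s : V₁ →ₗ[ℝ] V₂, g ∘ₗ s = f := by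
  obtain ⟨r, hr⟩ := g.rangeRestrict.exists_rightInverse_of_surjective
    (LinearMap.range_rangeRestrict g)
  refine ⟨r ∘ₗ f.codRestrict (LinearMap.range g) (fun x => h ⟨x, rfl⟩), ?_⟩
  refine LinearMap.ext fun x => ?_
  have h1 : g.rangeRestrict (r (f.codRestrict (LinearMap.range g) (fun x => h ⟨x, rfl⟩) x)) =
      f.codRestrict (LinearMap.range g) (fun x => h ⟨x, rfl⟩) x :=
    LinearMap.ext_iff.mp hr _
  have h2 := congrArg Subtype.val h1
  simpa using h2

lemma hurwitz_neg_one {k : ℕ} : PolyHurwitz (-1 : Matrix (Fin k) (Fin k) ℝ).charpoly := by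
  have h : (-1 : Matrix (Fin k) (Fin k) ℝ).charpoly = (Polynomial.X + 1) ^ k := by
    rw [Matrix.charpoly]
    have hc : charmatrix (-1 : Matrix (Fin k) (Fin k) ℝ) =
        Matrix.diagonal (fun _ => Polynomial.X + 1) := by
      ext i j
      by_cases hij : i = j
      · subst hij; simp [charmatrix_apply_eq]
      · simp [charmatrix_apply_ne _ _ _ hij, Matrix.one_apply_ne hij, Matrix.diagonal_apply_ne _ hij]
    rw [hc, Matrix.det_diagonal]
    simp
  rw [h]
  intro z hz
  simp only [Polynomial.map_pow, Polynomial.map_add, Polynomial.map_X, Polynomial.map_one,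
    Polynomial.IsRoot, Polynomial.eval_pow, Polynomial.eval_add, Polynomial.eval_X,
    Polynomial.eval_one] at hz
  have hk : z + 1 = 0 := (pow_eq_zero_iff'.mp hz).1
  have hz1 : z = -1 := eq_neg_of_add_eq_zero_left hk
  rw [hz1]
  norm_num

lemma graph_mapQ_charpoly {n₁ n₂ : ℕ} (φ : Euc n₁ →ₗ[ℝ] Euc n₂)
    (T : Euc n₁ × Euc n₂ →ₗ[ℝ] Euc n₁ × Euc n₂) (S : Submodule ℝ (Euc n₁ × Euc n₂))
    (hSk : S = LinearMap.ker
      (φ ∘ₗ LinearMap.fst ℝ (Euc n₁) (Euc n₂) - LinearMap.snd ℝ (Euc n₁) (Euc n₂)))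
    (h : S ≤ Submodule.comap T S) :
    (Submodule.mapQ S S T h).charpoly =
      ((φ ∘ₗ LinearMap.fst ℝ (Euc n₁) (Euc n₂) - LinearMap.snd ℝ (Euc n₁) (Euc n₂)) ∘ₗ T ∘ₗ
        LinearMap.prod 0 (-LinearMap.id)).charpoly := by
  subst hSk
  set π : Euc n₁ × Euc n₂ →ₗ[ℝ] Euc n₂ :=
    φ ∘ₗ LinearMap.fst ℝ (Euc n₁) (Euc n₂) - LinearMap.snd ℝ (Euc n₁) (Euc n₂) with hπ
  set S := LinearMap.ker π with hS
  let e0 : ((Euc n₁ × Euc n₂) ⧸ S) →ₗ[ℝ] Euc n₂ := S.liftQ π le_rfl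
  have he0 : ∀ v, e0 (S.mkQ v) = π v := fun v => rfl
  have hinj : Function.Injective e0 := by
    rw [← LinearMap.ker_eq_bot]
    exact Submodule.ker_liftQ_eq_bot _ _ _ le_rfl
  have hsurj : Function.Surjective e0 := fun y => ⟨S.mkQ (0, -y), by
    rw [he0]; simp [hπ]⟩
  let e : ((Euc n₁ × Euc n₂) ⧸ S) ≃ₗ[ℝ] Euc n₂ := LinearEquiv.ofBijective e0 ⟨hinj, hsurj⟩
  have he : ∀ v, e (S.mkQ v) = π v := fun v => rfl
  have key : e.conj (Submodule.mapQ S S T h) = π ∘ₗ T ∘ₗ LinearMap.prod 0 (-LinearMap.id) := by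
    refine LinearMap.ext fun y => ?_
    have hsymm : e.symm y = S.mkQ (0, -y) := by
      apply e.injective
      rw [e.apply_symm_apply, he]
      simp [hπ]
    rw [LinearEquiv.conj_apply_apply, hsymm, Submodule.mkQ_apply, Submodule.mapQ_apply,
      ← Submodule.mkQ_apply, he]
    simp
  rw [← key, LinearEquiv.charpoly_conj]

lemma mem_graphSub {n₁ n₂ : ℕ} (P : Matrix (Fin n₂) (Fin n₁) ℝ) (x : Euc n₁ × Euc n₂) :
    x ∈ graphSub P ↔ toEuclideanLin P x.1 = x.2 := by
  simp [graphSub, LinearMap.mem_ker, sub_eq_zero]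

lemma A12L_apply {n₁ n₂ : ℕ} (A₁ : Matrix (Fin n₁) (Fin n₁) ℝ) (A₂ : Matrix (Fin n₂) (Fin n₂) ℝ)
    (x : Euc n₁ × Euc n₂) : A12L A₁ A₂ x = (toEuclideanLin A₁ x.1, toEuclideanLin A₂ x.2) := rfl

lemma B12L_apply {n₁ n₂ m₂ : ℕ} (B₂ : Matrix (Fin n₂) (Fin m₂) ℝ) (u : Euc m₂) :
    B12L n₁ B₂ u = (0, toEuclideanLin B₂ u) := rfl

lemma D12L_apply {n₁ n₂ p : ℕ} (D₁ : Matrix (Fin n₁) (Fin p) ℝ) (D₂ : Matrix (Fin n₂) (Fin p) ℝ)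
    (w : Euc p) : D12L D₁ D₂ w = (toEuclideanLin D₁ w, toEuclideanLin D₂ w) := rfl

lemma C12L_apply {n₁ n₂ q : ℕ} (C₁ : Matrix (Fin q) (Fin n₁) ℝ) (C₂ : Matrix (Fin q) (Fin n₂) ℝ)
    (x : Euc n₁ × Euc n₂) :
    C12L C₁ C₂ x = toEuclideanLin C₂ x.2 - toEuclideanLin C₁ x.1 := rfl


set_option maxHeartbeats 2000000

/-- For `Σ = (A,B,C,D)` and an injective `P ∈ ℝ^{n×n̂}` with graph
`R = {(x̂,x) : Px̂ = x}`, the following are equivalent: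
(I) there exist a linear system `Σ̂ = (Â,B̂,Ĉ,D̂)` (with the same internal input and
output dimensions as `Σ`) and a matrix `P̂` with graph `R̂ = {(x,x̂) : P̂x = x̂}` such that
`R` induces a simulation function from `Σ̂` to `Σ` and `R̂` induces a simulation function
from `Σ` to `Σ̂`;
(II) `(A,B)` is stabilizable, `A·im P ⊆ im P + im B`, `im D ⊆ im P + im B`, and
`im P + ker C = ℝⁿ`. -/
theorem abstraction_existence_iff {n nh m p q : ℕ}
    (A : Matrix (Fin n) (Fin n) ℝ) (B : Matrix (Fin n) (Fin m) ℝ)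
    (C : Matrix (Fin q) (Fin n) ℝ) (D : Matrix (Fin n) (Fin p) ℝ)
    (P : Matrix (Fin n) (Fin nh) ℝ)
    (hP : LinearMap.ker (Matrix.toEuclideanLin P) = ⊥) :
    (∃ (mh : ℕ) (Ah : Matrix (Fin nh) (Fin nh) ℝ) (Bh : Matrix (Fin nh) (Fin mh) ℝ)
       (Ch : Matrix (Fin q) (Fin nh) ℝ) (Dh : Matrix (Fin nh) (Fin p) ℝ)
       (Ph : Matrix (Fin nh) (Fin n) ℝ),
        InducesSimFun Ah Bh Ch Dh A B C D (graphSub P) ∧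
        InducesSimFun A B C D Ah Bh Ch Dh (graphSub Ph)) ↔
      ((∃ K : Matrix (Fin m) (Fin n) ℝ, (A + B * K).IsHurwitz) ∧
        (LinearMap.range (Matrix.toEuclideanLin P)).map (Matrix.toEuclideanLin A) ≤
          LinearMap.range (Matrix.toEuclideanLin P) ⊔ LinearMap.range (Matrix.toEuclideanLin B) ∧
        LinearMap.range (Matrix.toEuclideanLin D) ≤
          LinearMap.range (Matrix.toEuclideanLin P) ⊔ LinearMap.range (Matrix.toEuclideanLin B) ∧
        LinearMap.range (Matrix.toEuclideanLin P) ⊔ LinearMap.ker (Matrix.toEuclideanLin C) = ⊤) := by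
  constructor
  · -- (I) → (II)
    rintro ⟨mh, Ah, Bh, Ch, Dh, Ph, ⟨⟨K, hinv, hur⟩, hb1, hc1, hd1⟩, ⟨-, -, -, hd2⟩⟩
    refine ⟨?_, ?_, ?_, ?_⟩
    · -- stabilizability
      refine ⟨toEuclideanLin.symm (K ∘ₗ LinearMap.inr ℝ (Euc nh) (Euc n)), ?_⟩
      have hcp := graph_mapQ_charpoly (toEuclideanLin P) (A12L Ah A + B12L nh B ∘ₗ K)
        (graphSub P) rfl hinv
      have heq : (toEuclideanLin P ∘ₗ LinearMap.fst ℝ (Euc nh) (Euc n) -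
            LinearMap.snd ℝ (Euc nh) (Euc n)) ∘ₗ (A12L Ah A + B12L nh B ∘ₗ K) ∘ₗ
            LinearMap.prod 0 (-LinearMap.id) =
          toEuclideanLin (A + B * toEuclideanLin.symm (K ∘ₗ LinearMap.inr ℝ (Euc nh) (Euc n))) := by
        rw [map_add, toEuclideanLin_mul', LinearEquiv.apply_symm_apply]
        refine LinearMap.ext fun y => ?_
        have h0 : (LinearMap.prod (0 : Euc n →ₗ[ℝ] Euc nh) (-LinearMap.id)) y
            = ((0 : Euc nh), -y) := by
          refine Prod.ext ?_ ?_ <;> simp [LinearMap.prod_apply, Pi.prod]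
        have h1 : ((0 : Euc nh), -y) = -(((0 : Euc nh), y)) := by
          refine Prod.ext ?_ ?_ <;> simp
        simp only [LinearMap.comp_apply, h0, h1, map_neg, LinearMap.add_apply, A12L_apply,
          B12L_apply, LinearMap.sub_apply, LinearMap.inr_apply, LinearMap.fst_apply,
          LinearMap.snd_apply, Prod.fst_neg, Prod.snd_neg, Prod.fst_add, Prod.snd_add,
          map_zero, LinearMap.zero_apply]
        simp
      show PolyHurwitz (A + B * toEuclideanLin.symm
        (K ∘ₗ LinearMap.inr ℝ (Euc nh) (Euc n))).charpoly
      rw [← charpoly_toEuclideanLin, ← heq, ← hcp]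
      exact hur
    · -- A (im P) ≤ im P ⊔ im B
      rintro _ ⟨v, ⟨xh, rfl⟩, rfl⟩
      have hmem : (xh, toEuclideanLin P xh) ∈ graphSub P := (mem_graphSub _ _).mpr rfl
      have h := hb1 (Submodule.mem_map_of_mem hmem)
      rw [Submodule.mem_sup] at h
      obtain ⟨y, hy, z, hz, hyz⟩ := h
      obtain ⟨u, rfl⟩ := hz
      rw [mem_graphSub] at hy
      have h2 := congrArg Prod.snd hyz
      simp only [Prod.snd_add, B12L_apply, A12L_apply] at h2
      rw [Submodule.mem_sup]
      exact ⟨toEuclideanLin P y.1, ⟨y.1, rfl⟩, toEuclideanLin B u, ⟨u, rfl⟩, by rw [hy]; exact h2⟩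
    · -- im D ≤ im P ⊔ im B
      rintro _ ⟨w, rfl⟩
      have h := hc1 ⟨w, rfl⟩
      rw [Submodule.mem_sup] at h
      obtain ⟨y, hy, z, hz, hyz⟩ := h
      obtain ⟨u, rfl⟩ := hz
      rw [mem_graphSub] at hy
      have h2 := congrArg Prod.snd hyz
      simp only [Prod.snd_add, B12L_apply, D12L_apply] at h2
      rw [Submodule.mem_sup]
      exact ⟨toEuclideanLin P y.1, ⟨y.1, rfl⟩, toEuclideanLin B u, ⟨u, rfl⟩, by rw [hy]; exact h2⟩
    · -- im P ⊔ ker C = ⊤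
      have hCh : ∀ xh : Euc nh,
          toEuclideanLin C (toEuclideanLin P xh) = toEuclideanLin Ch xh := by
        intro xh
        have h := hd1 ((mem_graphSub P (xh, toEuclideanLin P xh)).mpr rfl)
        rw [LinearMap.mem_ker, C12L_apply] at h
        exact sub_eq_zero.mp h
      have hPC : ∀ x : Euc n,
          toEuclideanLin C (toEuclideanLin P (toEuclideanLin Ph x)) = toEuclideanLin C x := by
        intro x
        have h := hd2 ((mem_graphSub Ph (x, toEuclideanLin Ph x)).mpr rfl)
        rw [LinearMap.mem_ker, C12L_apply] at h
        rw [hCh]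
        exact sub_eq_zero.mp h
      rw [eq_top_iff]
      rintro x -
      rw [Submodule.mem_sup]
      refine ⟨toEuclideanLin P (toEuclideanLin Ph x), ⟨_, rfl⟩,
        x - toEuclideanLin P (toEuclideanLin Ph x), ?_, by abel⟩
      rw [LinearMap.mem_ker, map_sub, hPC, sub_self]
  · -- (II) → (I)
    rintro ⟨⟨K₀, hK₀⟩, h2, h3, h4⟩
    obtain ⟨s₁, hs₁⟩ := exists_factor (toEuclideanLin A ∘ₗ toEuclideanLin P)
      ((toEuclideanLin P).coprod (toEuclideanLin B))
      (by rw [LinearMap.range_coprod, LinearMap.range_comp]; exact h2)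
    obtain ⟨s₂, hs₂⟩ := exists_factor (toEuclideanLin D)
      ((toEuclideanLin P).coprod (toEuclideanLin B))
      (by rw [LinearMap.range_coprod]; exact h3)
    have hr : LinearMap.range (toEuclideanLin C) ≤
        LinearMap.range (toEuclideanLin C ∘ₗ toEuclideanLin P) := by
      rintro _ ⟨x, rfl⟩
      have hx : x ∈ LinearMap.range (toEuclideanLin P) ⊔ LinearMap.ker (toEuclideanLin C) :=
        h4 ▸ Submodule.mem_top
      rw [Submodule.mem_sup] at hx
      obtain ⟨v, ⟨xh, rfl⟩, z, hz, rfl⟩ := hx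
      exact ⟨xh, by simp [LinearMap.mem_ker.mp hz]⟩
    obtain ⟨s₃, hs₃⟩ := exists_factor _ _ hr
    set X := LinearMap.fst ℝ (Euc nh) (Euc m) ∘ₗ s₁ with hX
    set M := LinearMap.snd ℝ (Euc nh) (Euc m) ∘ₗ s₁ with hM
    set Dl := LinearMap.fst ℝ (Euc nh) (Euc m) ∘ₗ s₂ with hDl
    set Nl := LinearMap.snd ℝ (Euc nh) (Euc m) ∘ₗ s₂ with hNl
    have hfact1 : ∀ v, toEuclideanLin A (toEuclideanLin P v) =
        toEuclideanLin P (X v) + toEuclideanLin B (M v) := fun v => by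
      simpa [hX, hM] using (LinearMap.ext_iff.mp hs₁ v).symm
    have hfact2 : ∀ w, toEuclideanLin D w =
        toEuclideanLin P (Dl w) + toEuclideanLin B (Nl w) := fun w => by
      simpa [hDl, hNl] using (LinearMap.ext_iff.mp hs₂ w).symm
    have hfact3 : ∀ x, toEuclideanLin C (toEuclideanLin P (s₃ x)) = toEuclideanLin C x :=
      fun x => LinearMap.ext_iff.mp hs₃ x
    have hAh : toEuclideanLin (toEuclideanLin.symm X) = X := LinearEquiv.apply_symm_apply _ _
    have hDh : toEuclideanLin (toEuclideanLin.symm Dl) = Dl := LinearEquiv.apply_symm_apply _ _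
    have hPh : toEuclideanLin (toEuclideanLin.symm s₃) = s₃ := LinearEquiv.apply_symm_apply _ _
    refine ⟨nh, toEuclideanLin.symm X, 1, C * P, toEuclideanLin.symm Dl, toEuclideanLin.symm s₃,
      ⟨?_, ?_, ?_, ?_⟩, ⟨?_, ?_, ?_, ?_⟩⟩
    · -- Sim1 (a)
      set Kd : Euc nh × Euc n →ₗ[ℝ] Euc m :=
        toEuclideanLin K₀ ∘ₗ (LinearMap.snd ℝ (Euc nh) (Euc n) -
          toEuclideanLin P ∘ₗ LinearMap.fst ℝ (Euc nh) (Euc n)) -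
          M ∘ₗ LinearMap.fst ℝ (Euc nh) (Euc n) with hKd
      have hinv : graphSub P ≤ (graphSub P).comap
          (A12L (toEuclideanLin.symm X) A + B12L nh B ∘ₗ Kd) := by
        rintro ⟨xh, x⟩ hmem
        rw [mem_graphSub] at hmem
        dsimp only at hmem
        rw [Submodule.mem_comap, mem_graphSub]
        simp only [LinearMap.add_apply, A12L_apply, B12L_apply, hKd, LinearMap.comp_apply,
          LinearMap.sub_apply, LinearMap.fst_apply, LinearMap.snd_apply, Prod.fst_add,
          Prod.snd_add, hAh]
        rw [← hmem]
        simp only [sub_self, map_zero, zero_sub, map_neg, add_zero]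
        rw [hfact1 xh]
        abel
      refine ⟨Kd, hinv, ?_⟩
      rw [graph_mapQ_charpoly (toEuclideanLin P)
        (A12L (toEuclideanLin.symm X) A + B12L nh B ∘ₗ Kd) (graphSub P) rfl hinv]
      have heq : (toEuclideanLin P ∘ₗ LinearMap.fst ℝ (Euc nh) (Euc n) -
            LinearMap.snd ℝ (Euc nh) (Euc n)) ∘ₗ
            (A12L (toEuclideanLin.symm X) A + B12L nh B ∘ₗ Kd) ∘ₗ
            LinearMap.prod 0 (-LinearMap.id) = toEuclideanLin (A + B * K₀) := by
        rw [map_add, toEuclideanLin_mul']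
        refine LinearMap.ext fun y => ?_
        have h0 : (LinearMap.prod (0 : Euc n →ₗ[ℝ] Euc nh) (-LinearMap.id)) y
            = ((0 : Euc nh), -y) := by
          refine Prod.ext ?_ ?_ <;> simp [LinearMap.prod_apply, Pi.prod]
        simp only [LinearMap.comp_apply, h0, LinearMap.add_apply, A12L_apply, B12L_apply,
          hKd, LinearMap.sub_apply, LinearMap.fst_apply, LinearMap.snd_apply, Prod.fst_add,
          Prod.snd_add, map_zero, map_neg, sub_zero, hAh, LinearMap.zero_apply,
          Prod.smul_mk, neg_smul, one_smul, smul_zero, Prod.fst_neg, Prod.snd_neg, neg_neg,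
          neg_zero, add_zero, zero_add, map_add, map_sub]
        abel
      rw [heq, charpoly_toEuclideanLin]
      exact hK₀
    · -- Sim1 (b)
      intro v hv
      rw [Submodule.mem_map] at hv
      obtain ⟨⟨xh, x⟩, hmem, rfl⟩ := hv
      rw [mem_graphSub] at hmem
      dsimp only at hmem
      rw [Submodule.mem_sup]
      refine ⟨(X xh, toEuclideanLin P (X xh)), (mem_graphSub _ _).mpr rfl,
        (0, toEuclideanLin B (M xh)), ⟨M xh, rfl⟩, ?_⟩
      rw [A12L_apply]
      refine Prod.ext ?_ ?_
      · simp [hAh]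
      · simp only [Prod.snd_add]
        rw [← hmem, hfact1 xh]
    · -- Sim1 (c)
      rintro _ ⟨w, rfl⟩
      rw [Submodule.mem_sup]
      refine ⟨(Dl w, toEuclideanLin P (Dl w)), (mem_graphSub _ _).mpr rfl,
        (0, toEuclideanLin B (Nl w)), ⟨Nl w, rfl⟩, ?_⟩
      rw [D12L_apply]
      refine Prod.ext ?_ ?_
      · simp [hDh]
      · simp only [Prod.snd_add]
        rw [hfact2 w]
    · -- Sim1 (d)
      rintro ⟨xh, x⟩ hmem
      rw [mem_graphSub] at hmem
      dsimp only at hmem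
      rw [LinearMap.mem_ker, C12L_apply, toEuclideanLin_mul', sub_eq_zero]
      rw [← hmem]
      rfl
    · -- Sim2 (a)
      set Kd2 : Euc n × Euc nh →ₗ[ℝ] Euc nh :=
        s₃ ∘ₗ LinearMap.fst ℝ (Euc n) (Euc nh) - LinearMap.snd ℝ (Euc n) (Euc nh) -
          X ∘ₗ LinearMap.snd ℝ (Euc n) (Euc nh) +
          s₃ ∘ₗ toEuclideanLin A ∘ₗ LinearMap.fst ℝ (Euc n) (Euc nh) with hKd2
      have hinv : graphSub (toEuclideanLin.symm s₃) ≤ (graphSub (toEuclideanLin.symm s₃)).comap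
          (A12L A (toEuclideanLin.symm X) + B12L n (1 : Matrix (Fin nh) (Fin nh) ℝ) ∘ₗ Kd2) := by
        rintro ⟨x, xh⟩ hmem
        rw [mem_graphSub, hPh] at hmem
        dsimp only at hmem
        rw [Submodule.mem_comap, mem_graphSub, hPh]
        simp only [LinearMap.add_apply, A12L_apply, B12L_apply, hKd2, LinearMap.comp_apply,
          LinearMap.sub_apply, LinearMap.add_apply, LinearMap.fst_apply, LinearMap.snd_apply,
          Prod.fst_add, Prod.snd_add, hAh, toEuclideanLin_one', LinearMap.id_apply]
        rw [← hmem]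
        simp only [add_zero]
        abel
      refine ⟨Kd2, hinv, ?_⟩
      rw [graph_mapQ_charpoly (toEuclideanLin (toEuclideanLin.symm s₃))
        (A12L A (toEuclideanLin.symm X) +
          B12L n (1 : Matrix (Fin nh) (Fin nh) ℝ) ∘ₗ Kd2)
        (graphSub (toEuclideanLin.symm s₃)) rfl hinv]
      have heq : (toEuclideanLin (toEuclideanLin.symm s₃) ∘ₗ LinearMap.fst ℝ (Euc n) (Euc nh) -
            LinearMap.snd ℝ (Euc n) (Euc nh)) ∘ₗ
            (A12L A (toEuclideanLin.symm X) +
              B12L n (1 : Matrix (Fin nh) (Fin nh) ℝ) ∘ₗ Kd2) ∘ₗ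
            LinearMap.prod 0 (-LinearMap.id) =
          toEuclideanLin (-1 : Matrix (Fin nh) (Fin nh) ℝ) := by
        have hneg : toEuclideanLin (-1 : Matrix (Fin nh) (Fin nh) ℝ) =
            -(LinearMap.id : Euc nh →ₗ[ℝ] Euc nh) := by
          rw [map_neg, toEuclideanLin_one']
        rw [hneg]
        refine LinearMap.ext fun y => ?_
        have h0 : (LinearMap.prod (0 : Euc nh →ₗ[ℝ] Euc n) (-LinearMap.id)) y
            = ((0 : Euc n), -y) := by
          refine Prod.ext ?_ ?_ <;> simp [LinearMap.prod_apply, Pi.prod]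
        simp only [LinearMap.comp_apply, h0, LinearMap.add_apply, A12L_apply, B12L_apply,
          hKd2, LinearMap.sub_apply, LinearMap.fst_apply, LinearMap.snd_apply, Prod.fst_add,
          Prod.snd_add, map_zero, map_neg, hAh, hPh, toEuclideanLin_one', LinearMap.id_apply,
          LinearMap.neg_apply, LinearMap.zero_apply, zero_add, add_zero, neg_neg, neg_zero,
          map_add, map_sub, Prod.smul_mk, neg_smul, one_smul, smul_zero, Prod.fst_neg,
          Prod.snd_neg]
        abel
      rw [heq, charpoly_toEuclideanLin]
      exact hurwitz_neg_one
    · -- Sim2 (b)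
      have htop : graphSub (toEuclideanLin.symm s₃) ⊔
          LinearMap.range (B12L n (1 : Matrix (Fin nh) (Fin nh) ℝ)) = ⊤ := by
        rw [eq_top_iff]
        rintro ⟨x, xh⟩ -
        rw [Submodule.mem_sup]
        refine ⟨(x, s₃ x), (mem_graphSub _ _).mpr (by rw [hPh]),
          (0, xh - s₃ x), ⟨xh - s₃ x, by rw [B12L_apply, toEuclideanLin_one']; rfl⟩, ?_⟩
        refine Prod.ext (by simp) (by simp)
      exact le_trans le_top htop.ge
    · -- Sim2 (c)
      have htop : graphSub (toEuclideanLin.symm s₃) ⊔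
          LinearMap.range (B12L n (1 : Matrix (Fin nh) (Fin nh) ℝ)) = ⊤ := by
        rw [eq_top_iff]
        rintro ⟨x, xh⟩ -
        rw [Submodule.mem_sup]
        refine ⟨(x, s₃ x), (mem_graphSub _ _).mpr (by rw [hPh]),
          (0, xh - s₃ x), ⟨xh - s₃ x, by rw [B12L_apply, toEuclideanLin_one']; rfl⟩, ?_⟩
        refine Prod.ext (by simp) (by simp)
      exact le_trans le_top htop.ge
    · -- Sim2 (d)
      rintro ⟨x, xh⟩ hmem
      rw [mem_graphSub, hPh] at hmem
      dsimp only at hmem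
      rw [LinearMap.mem_ker, C12L_apply, toEuclideanLin_mul', sub_eq_zero]
      show (toEuclideanLin C ∘ₗ toEuclideanLin P) xh = toEuclideanLin C x
      rw [← hmem, LinearMap.comp_apply, hfact3]
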